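/- Let K be a field, V a vector space over K, B : V →ₗ[K] V →ₗ[K] K a bilinear form, S a subset of V whose K-linear span is all of V, β ∈ V, and λ ∈ V with m := B(λ, β) ≠ 0. Then: (i) every element of the set T := { m • α − B(α, β) • λ : α ∈ S } satisfies B(t, β) = 0, and (ii) every δ ∈ V with B(δ, β) = 0 lies in the K-linear span of T. -/

import Mathlib

/-!
The map `v ↦ B(λ, β) • v - B(v, β) • λ` is linear, takes values in the kernel of `B(·, β)`,
and acts on that kernel as multiplication by the unit `B(λ, β)`. Being linear, it sends the
span of `S`, i.e. all of `V`, into the span of the image of `S`, which is `T`.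
-/

theorem LinearMap.apply_mem_span_image_of_span_eq_top {R M N : Type*} [Semiring R]
    [AddCommMonoid M] [Module R M] [AddCommMonoid N] [Module R N] (f : M →ₗ[R] N)
    {S : Set M} (hS : Submodule.span R S = ⊤) (v : M) :
    f v ∈ Submodule.span R (f '' S) := by
  rw [← Submodule.map_span, hS]
  exact Submodule.mem_map_of_mem Submodule.mem_top

namespace LinearMap

variable {K V : Type*} [CommRing K] [AddCommGroup V] [Module K V]
  (B : V →ₗ[K] V →ₗ[K] K) (β l : V)

def capOff : V →ₗ[K] V :=
  B l β • LinearMap.id - (B.flip β).smulRight l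

@[simp]
theorem capOff_apply (v : V) : B.capOff β l v = B l β • v - B v β • l := rfl

theorem capOff_apply_right_eq_zero (v : V) : B (B.capOff β l v) β = 0 := by
  simp [mul_comm]

theorem capOff_apply_of_right_eq_zero {δ : V} (hδ : B δ β = 0) :
    B.capOff β l δ = B l β • δ := by
  simp [hδ]

end LinearMap

theorem stmt_2 {K V : Type*} [Field K] [AddCommGroup V] [Module K V]
    (B : V →ₗ[K] V →ₗ[K] K)
    (S : Set V) (hS : Submodule.span K S = ⊤)
    (β l : V) (hm : B l β ≠ 0) :
    (∀ t ∈ {x : V | ∃ α ∈ S, x = B l β • α - B α β • l}, B t β = 0) ∧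
    (∀ δ : V, B δ β = 0 →
      δ ∈ Submodule.span K {x : V | ∃ α ∈ S, x = B l β • α - B α β • l}) := by
  have hT : {x : V | ∃ α ∈ S, x = B l β • α - B α β • l} = B.capOff β l '' S := by
    ext x
    simp [eq_comm]
  rw [hT]
  refine ⟨?_, fun δ hδ => ?_⟩
  · rintro _ ⟨α, -, rfl⟩
    exact B.capOff_apply_right_eq_zero β l α
  · have h := (B.capOff β l).apply_mem_span_image_of_span_eq_top hS δ
    rw [B.capOff_apply_of_right_eq_zero β l hδ] at h
    exact (Submodule.smul_mem_iff _ hm).mp h
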